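/- Let P₁,…,Pₙ be a convex equal-area polygon (normalized det(v_{i±1/2}, n_i) = 1) with discrete affine curvatures μ_{i+1/2}. Then for every quadratic polynomial q(x,y) of degree ≤ 2, ∑_{i=1}^n Δμ(i) q(P_i) = 0, where Δμ(i) = μ_{i+1/2} − μ_{i−1/2}. -/
import Mathlib

section helpers
variable {n : ℕ} [NeZero n]

private lemma shift_sum (h : ZMod n → ℝ) :
    ∑ i : ZMod n, h (i + 1) = ∑ i : ZMod n, h i :=
  Fintype.sum_equiv (Equiv.addRight 1) _ _ (fun _ => rfl)

private lemma shift_sum' (h : ZMod n → ℝ) :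
    ∑ i : ZMod n, h (i - 1) = ∑ i : ZMod n, h i := by
  rw [← shift_sum (fun j => h (j - 1))]
  simp

private lemma abel (μ g : ZMod n → ℝ) :
    ∑ i : ZMod n, (μ i - μ (i - 1)) * g i
      = -∑ i : ZMod n, μ i * (g (i + 1) - g i) := by
  have e1 : ∑ i : ZMod n, μ (i - 1) * g i = ∑ i : ZMod n, μ i * g (i + 1) := by
    rw [← shift_sum (fun j => μ (j - 1) * g j)]
    simp
  simp_rw [sub_mul, mul_sub]
  rw [Finset.sum_sub_distrib, Finset.sum_sub_distrib, e1]
  ring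

private lemma lin_sum (μ u ν : ZMod n → ℝ)
    (hu : ∀ i, μ i * (u (i + 1) - u i) = ν i - ν (i + 1)) :
    ∑ i : ZMod n, μ i * (u (i + 1) - u i) = 0 := by
  simp_rw [hu]
  rw [Finset.sum_sub_distrib, shift_sum, sub_self]

private lemma quad_sum (μ u w ν ω : ZMod n → ℝ)
    (hν : ∀ i, ν i = u (i - 1) + u (i + 1) - 2 * u i)
    (hω : ∀ i, ω i = w (i - 1) + w (i + 1) - 2 * w i)
    (hu : ∀ i, μ i * (u (i + 1) - u i) = ν i - ν (i + 1))
    (hw : ∀ i, μ i * (w (i + 1) - w i) = ω i - ω (i + 1)) :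
    ∑ i : ZMod n, μ i * (u (i + 1) * w (i + 1) - u i * w i) = 0 := by
  have step : ∀ i : ZMod n, μ i * (u (i + 1) * w (i + 1) - u i * w i)
      = ((u i + u (i + 1)) / 2 * (ω i - ω (i + 1))
        + (w i + w (i + 1)) / 2 * (ν i - ν (i + 1))) := by
    intro i
    rw [← hu i, ← hw i]; ring
  simp_rw [step]
  have split : ∀ i : ZMod n,
      (u i + u (i + 1)) / 2 * (ω i - ω (i + 1))
        + (w i + w (i + 1)) / 2 * (ν i - ν (i + 1))
      = ((u i + u (i + 1)) / 2 * ω i + (w i + w (i + 1)) / 2 * ν i)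
        - ((u i + u (i + 1)) / 2 * ω (i + 1) + (w i + w (i + 1)) / 2 * ν (i + 1)) := by
    intro i; ring
  simp_rw [split]
  rw [Finset.sum_sub_distrib]
  have e1 : ∑ i : ZMod n,
      ((u i + u (i + 1)) / 2 * ω (i + 1) + (w i + w (i + 1)) / 2 * ν (i + 1))
      = ∑ i : ZMod n,
      ((u (i - 1) + u i) / 2 * ω i + (w (i - 1) + w i) / 2 * ν i) := by
    rw [← shift_sum (fun j => (u (j - 1) + u j) / 2 * ω j + (w (j - 1) + w j) / 2 * ν j)]
    simp
  rw [e1, ← Finset.sum_sub_distrib]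
  have tele : ∀ i : ZMod n,
      ((u i + u (i + 1)) / 2 * ω i + (w i + w (i + 1)) / 2 * ν i)
        - ((u (i - 1) + u i) / 2 * ω i + (w (i - 1) + w i) / 2 * ν i)
      = (u (i + 1) - u i) * (w (i + 1) - w i)
        - (u (i - 1 + 1) - u (i - 1)) * (w (i - 1 + 1) - w (i - 1)) := by
    intro i
    rw [hν i, hω i]
    simp only [sub_add_cancel]
    ring
  simp_rw [tele]
  rw [Finset.sum_sub_distrib]
  rw [shift_sum' (fun j => (u (j + 1) - u j) * (w (j + 1) - w j))]
  exact sub_self _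

end helpers

/-- 2x2 determinant of two plane vectors. -/
def det2 (v w : ℝ × ℝ) : ℝ := v.1 * w.2 - v.2 * w.1

/-- For a normalized equal-area polygon with discrete affine curvatures `μ`, for every
quadratic polynomial `q(x,y) = a + bx + cy + dx² + exy + fy²` of degree ≤ 2,
`∑ i Δμ(i) q(P_i) = 0`, where `Δμ(i) = μ_{i+1/2} − μ_{i−1/2}`.
Here `μ i` denotes `μ_{i+1/2}`. -/
theorem equal_area_quadratic_sum_zero (n : ℕ) [NeZero n] (hn : 5 ≤ n)
    (P : ZMod n → ℝ × ℝ) (μ : ZMod n → ℝ)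
    (hnorm : ∀ i : ZMod n,
      det2 (P i - P (i - 1)) (P (i - 1) + P (i + 1) - (2 : ℝ) • P i) = 1 ∧
      det2 (P (i + 1) - P i) (P (i - 1) + P (i + 1) - (2 : ℝ) • P i) = 1)
    (hμ : ∀ i : ZMod n,
      (P i + P (i + 2) - (2 : ℝ) • P (i + 1))
          - (P (i - 1) + P (i + 1) - (2 : ℝ) • P i)
        = (-(μ i)) • (P (i + 1) - P i)) :
    ∀ a b c d e f : ℝ,
      ∑ i : ZMod n, (μ i - μ (i - 1)) *
        (a + b * (P i).1 + c * (P i).2 + d * (P i).1 ^ 2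
          + e * (P i).1 * (P i).2 + f * (P i).2 ^ 2) = 0 := by
  intro a b c d e f
  set x : ZMod n → ℝ := fun i => (P i).1 with hxdef
  set y : ZMod n → ℝ := fun i => (P i).2 with hydef
  set ν : ZMod n → ℝ := fun i => x (i - 1) + x (i + 1) - 2 * x i with hνdef
  set ω : ZMod n → ℝ := fun i => y (i - 1) + y (i + 1) - 2 * y i with hωdef
  -- component form of hμ
  have hx : ∀ i : ZMod n, μ i * (x (i + 1) - x i) = ν i - ν (i + 1) := by
    intro i
    have h := congrArg Prod.fst (hμ i)
    simp only [Prod.fst_sub, Prod.fst_add, Prod.smul_fst, smul_eq_mul] at h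
    have h2 : ν (i + 1) = x i + x (i + 2) - 2 * x (i + 1) := by
      simp only [hνdef]
      rw [add_sub_cancel_right]
      ring_nf
    rw [h2]
    simp only [hνdef, hxdef]
    nlinarith [h]
  have hy : ∀ i : ZMod n, μ i * (y (i + 1) - y i) = ω i - ω (i + 1) := by
    intro i
    have h := congrArg Prod.snd (hμ i)
    simp only [Prod.snd_sub, Prod.snd_add, Prod.smul_snd, smul_eq_mul] at h
    have h2 : ω (i + 1) = y i + y (i + 2) - 2 * y (i + 1) := by
      simp only [hωdef]
      rw [add_sub_cancel_right]
      ring_nf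
    rw [h2]
    simp only [hωdef, hydef]
    nlinarith [h]
  -- the six basic vanishing sums
  have s1 : ∑ i : ZMod n, μ i * (x (i + 1) - x i) = 0 := lin_sum μ x ν hx
  have s2 : ∑ i : ZMod n, μ i * (y (i + 1) - y i) = 0 := lin_sum μ y ω hy
  have s3 : ∑ i : ZMod n, μ i * (x (i + 1) * x (i + 1) - x i * x i) = 0 :=
    quad_sum μ x x ν ν (fun _ => rfl) (fun _ => rfl) hx hx
  have s4 : ∑ i : ZMod n, μ i * (x (i + 1) * y (i + 1) - x i * y i) = 0 :=
    quad_sum μ x y ν ω (fun _ => rfl) (fun _ => rfl) hx hy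
  have s5 : ∑ i : ZMod n, μ i * (y (i + 1) * y (i + 1) - y i * y i) = 0 :=
    quad_sum μ y y ω ω (fun _ => rfl) (fun _ => rfl) hy hy
  -- assemble
  rw [abel μ (fun i => a + b * x i + c * y i + d * x i ^ 2 + e * x i * y i + f * y i ^ 2)]
  have expand : ∀ i : ZMod n,
      μ i * ((a + b * x (i + 1) + c * y (i + 1) + d * x (i + 1) ^ 2
          + e * x (i + 1) * y (i + 1) + f * y (i + 1) ^ 2)
        - (a + b * x i + c * y i + d * x i ^ 2 + e * x i * y i + f * y i ^ 2))
      = b * (μ i * (x (i + 1) - x i)) + c * (μ i * (y (i + 1) - y i))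
        + d * (μ i * (x (i + 1) * x (i + 1) - x i * x i))
        + e * (μ i * (x (i + 1) * y (i + 1) - x i * y i))
        + f * (μ i * (y (i + 1) * y (i + 1) - y i * y i)) := by
    intro i; ring
  simp_rw [expand]
  rw [Finset.sum_add_distrib, Finset.sum_add_distrib, Finset.sum_add_distrib,
    Finset.sum_add_distrib, ← Finset.mul_sum, ← Finset.mul_sum, ← Finset.mul_sum,
    ← Finset.mul_sum, ← Finset.mul_sum, s1, s2, s3, s4, s5]
  ring
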